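/- arXiv:1211.0998 — 2 statements merged into one kernel-verified Lean document; each statement's English description precedes it below -/
import Mathlib

section
/- Let r ∈ ℤ_{≥0}, M an a_r-module, and α ∈ ℂ. Then for every integer s > 2r+2 and all l, m ∈ ℤ, the operator ω^{(s)}_{l,m} is identically zero on N(M,α). -/
/-!
On `v ⊗ t^n`, `D_{l-m-i} ∘ D_{m+i}` acts as `F(i) ⊗ t^{n+l}` for a single `M`-valued map `F`, which
is a polynomial map of degree at most `2r + 2` in `i`: each `D` multiplies by `α + (affine in i)` or
by `(affine in i)^{k+1}` with `k ≤ r`, and applies some `T_k`. Hence `ω^{(s)}_{l,m}(v ⊗ t^n)` is the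
`s`-th finite difference of `F` at `0`, placed in degree `n + l`, and it vanishes once `s > 2r + 2`.
-/

open Finsupp

variable {M : Type*} [AddCommGroup M] [Module ℂ M]

/-- `(M, T)` is an `a_r`-module: `M` carries operators `T_0, …, T_r` with
`T_i∘T_j − T_j∘T_i = (j−i)·T_{i+j}` for `i+j ≤ r` and `T_i∘T_j = T_j∘T_i` for `i+j > r`. -/
def IsArModule (r : ℕ) (T : ℕ → Module.End ℂ M) : Prop :=
  (∀ i j, i ≤ r → j ≤ r → i + j ≤ r →
      T i ∘ₗ T j - T j ∘ₗ T i = (((j : ℂ) - (i : ℂ)) • T (i + j))) ∧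
  (∀ i j, i ≤ r → j ≤ r → r < i + j → T i ∘ₗ T j = T j ∘ₗ T i)

/-- A subspace `U ⊆ M` is an `a_r`-submodule if `T_i U ⊆ U` for all `0 ≤ i ≤ r`. -/
def IsArSubmodule (r : ℕ) (T : ℕ → Module.End ℂ M) (U : Submodule ℂ M) : Prop :=
  ∀ i ≤ r, ∀ v ∈ U, T i v ∈ U

/-- `M` is a simple `a_r`-module: nonzero, and the only `a_r`-submodules are `0` and `M`. -/
def IsSimpleArModule (r : ℕ) (T : ℕ → Module.End ℂ M) : Prop :=
  (∃ v : M, v ≠ 0) ∧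
    ∀ U : Submodule ℂ M, IsArSubmodule r T U → U = ⊥ ∨ U = ⊤

/-- The operator `D_m` on `N(M, α) = ⊕_{n ∈ ℤ} M ⊗ t^n` (finitely supported functions `ℤ → M`,
with `v ⊗ t^n` the function `Finsupp.single n v`), given by
`D_m (v ⊗ t^n) = ((α+n)•v + Σ_{i=0}^r (m^{i+1}/(i+1)!) • T_i v) ⊗ t^{n+m}`. -/
noncomputable def Dop (r : ℕ) (T : ℕ → Module.End ℂ M) (α : ℂ) (m : ℤ) :
    (ℤ →₀ M) →ₗ[ℂ] (ℤ →₀ M) :=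
  Finsupp.lsum ℂ fun n : ℤ =>
    (Finsupp.lsingle (n + m) : M →ₗ[ℂ] ℤ →₀ M) ∘ₗ
      ((α + (n : ℂ)) • (LinearMap.id : M →ₗ[ℂ] M) +
        ∑ i ∈ Finset.range (r + 1),
          ((m : ℂ) ^ (i + 1) / (Nat.factorial (i + 1) : ℂ)) • (T i : M →ₗ[ℂ] M))

/-- The operator `ω^{(s)}_{l,m} = Σ_{i=0}^s binom(s,i)·(−1)^{s−i}·D_{l−m−i}∘D_{m+i}`. -/
noncomputable def omegaOp (r : ℕ) (T : ℕ → Module.End ℂ M) (α : ℂ) (s : ℕ) (l m : ℤ) :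
    (ℤ →₀ M) →ₗ[ℂ] (ℤ →₀ M) :=
  ∑ i ∈ Finset.range (s + 1),
    ((s.choose i : ℂ) * (-1) ^ (s - i)) •
      (Dop r T α (l - m - (i : ℤ)) ∘ₗ Dop r T α (m + (i : ℤ)))

open Polynomial fwdDiff

section PolynomialMaps

variable (R V : Type*) [CommRing R] [AddCommGroup V] [Module R V]

def polynomialMapsLE (d : ℕ) : Submodule R (R → V) :=
  Submodule.span R {f | ∃ P : R[X], P.natDegree ≤ d ∧ ∃ v : V, f = fun x => P.eval x • v}

variable {R V}

theorem const_mem_polynomialMapsLE (v : V) : (fun _ => v) ∈ polynomialMapsLE R V 0 :=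
  Submodule.subset_span ⟨1, by simp, v, by simp⟩

theorem polynomialMapsLE_mono {d e : ℕ} (hde : d ≤ e) :
    polynomialMapsLE R V d ≤ polynomialMapsLE R V e :=
  Submodule.span_mono fun _ ⟨P, hP, v, hf⟩ => ⟨P, hP.trans hde, v, hf⟩

theorem comp_mem_polynomialMapsLE {W : Type*} [AddCommGroup W] [Module R W] (φ : V →ₗ[R] W)
    {d : ℕ} {f : R → V} (hf : f ∈ polynomialMapsLE R V d) :
    φ ∘ f ∈ polynomialMapsLE R W d := by
  induction hf using Submodule.span_induction with
  | mem f hf =>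
    obtain ⟨P, hP, v, rfl⟩ := hf
    exact Submodule.subset_span ⟨P, hP, φ v, by ext; simp⟩
  | zero => simp
  | add f g _ _ hf hg => simpa using add_mem hf hg
  | smul c f _ hf => convert Submodule.smul_mem _ c hf using 1; ext; simp

theorem eval_smul_mem_polynomialMapsLE (P : R[X]) {d : ℕ} {f : R → V}
    (hf : f ∈ polynomialMapsLE R V d) :
    (fun x => P.eval x • f x) ∈ polynomialMapsLE R V (P.natDegree + d) := by
  induction hf using Submodule.span_induction with
  | mem f hf =>
    obtain ⟨Q, hQ, v, rfl⟩ := hf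
    refine Submodule.subset_span ⟨P * Q, natDegree_mul_le.trans (by omega), v, ?_⟩
    ext; simp [mul_smul]
  | zero => simp only [Pi.zero_apply, smul_zero]; exact zero_mem _
  | add f g _ _ hf hg => convert add_mem hf hg using 1; ext; simp
  | smul c f _ hf => convert Submodule.smul_mem _ c hf using 1; ext; simp [smul_comm _ c]

theorem sum_choose_mul_neg_one_pow_mul_eval_eq_zero {P : R[X]} {s : ℕ} (hP : P.natDegree < s) :
    ∑ i ∈ Finset.range (s + 1), ((s.choose i : R) * (-1) ^ (s - i)) * P.eval (i : R) = 0 := by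
  have h := congr_fun (fwdDiff_iter_eq_zero_of_degree_lt hP) 0
  rw [fwdDiff_iter_eq_sum_shift, Pi.zero_apply] at h
  rw [← h]
  refine Finset.sum_congr rfl fun i _ => ?_
  simp [zsmul_eq_mul, mul_comm]

theorem sum_choose_mul_neg_one_pow_smul_eq_zero {d s : ℕ} (hds : d < s) {f : R → V}
    (hf : f ∈ polynomialMapsLE R V d) :
    ∑ i ∈ Finset.range (s + 1), ((s.choose i : R) * (-1) ^ (s - i)) • f i = 0 := by
  induction hf using Submodule.span_induction with
  | mem f hf =>
    obtain ⟨P, hP, v, rfl⟩ := hf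
    simp_rw [smul_smul, ← Finset.sum_smul]
    rw [sum_choose_mul_neg_one_pow_mul_eval_eq_zero (hP.trans_lt hds), zero_smul]
  | zero => simp
  | add f g _ _ hf hg => simp [smul_add, Finset.sum_add_distrib, hf, hg]
  | smul c f _ hf => simp [smul_comm _ c, ← Finset.smul_sum, hf]

end PolynomialMaps

noncomputable def dopSymbol (r : ℕ) (T : ℕ → Module.End ℂ M) (α a b : ℂ) : Module.End ℂ M :=
  (α + a) • LinearMap.id + ∑ i ∈ Finset.range (r + 1), (b ^ (i + 1) / ((i + 1).factorial : ℂ)) • T i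

theorem Dop_single (r : ℕ) (T : ℕ → Module.End ℂ M) (α : ℂ) (m n : ℤ) (v : M) :
    Dop r T α m (single n v) = single (n + m) (dopSymbol r T α n m v) := by
  rw [Dop, lsum_single]
  rfl

theorem omegaOp_single (r : ℕ) (T : ℕ → Module.End ℂ M) (α : ℂ) (s : ℕ) (l m n : ℤ) (v : M) :
    omegaOp r T α s l m (single n v) = single (n + l)
      (∑ i ∈ Finset.range (s + 1), ((s.choose i : ℂ) * (-1) ^ (s - i)) •
        dopSymbol r T α (n + m + i) (l - m - i) (dopSymbol r T α n (m + i) v)) := by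
  simp only [omegaOp, LinearMap.sum_apply, LinearMap.smul_apply, LinearMap.comp_apply, Dop_single,
    smul_single, single_finsetSum]
  refine Finset.sum_congr rfl fun i _ => ?_
  rw [show n + (m + i) + (l - m - i) = n + l by ring]
  push_cast
  ring_nf

theorem dopSymbol_mem_polynomialMapsLE (r : ℕ) (T : ℕ → Module.End ℂ M) (α : ℂ) {P Q : ℂ[X]}
    (hP : P.natDegree ≤ 1) (hQ : Q.natDegree ≤ 1) {d : ℕ} {f : ℂ → M}
    (hf : f ∈ polynomialMapsLE ℂ M d) :
    (fun x => dopSymbol r T α (P.eval x) (Q.eval x) (f x)) ∈ polynomialMapsLE ℂ M (r + 1 + d) := by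
  have hsplit : (fun x => dopSymbol r T α (P.eval x) (Q.eval x) (f x)) =
      (fun x => (C α + P).eval x • f x) + ∑ i ∈ Finset.range (r + 1),
        fun x => (Q ^ (i + 1) * C (((i + 1).factorial : ℂ))⁻¹).eval x • T i (f x) := by
    ext x
    simp [dopSymbol, div_eq_mul_inv]
  rw [hsplit]
  refine add_mem (polynomialMapsLE_mono ?_ (eval_smul_mem_polynomialMapsLE _ hf))
    (Submodule.sum_mem _ fun i hi => polynomialMapsLE_mono ?_
      (eval_smul_mem_polynomialMapsLE _ (comp_mem_polynomialMapsLE (T i) hf)))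
  · rw [natDegree_C_add]
    omega
  · have := (natDegree_mul_C_le (Q ^ (i + 1)) ((i + 1).factorial : ℂ)⁻¹).trans
      (natDegree_pow_le_of_le (i + 1) hQ)
    rw [Finset.mem_range] at hi
    omega

theorem omega_vanishes_above_top_general (r : ℕ) (T : ℕ → Module.End ℂ M)
    (α : ℂ) (s : ℕ) (hs : 2 * r + 2 < s) (l m : ℤ) :
    omegaOp r T α s l m = 0 := by
  refine lhom_ext fun n v => ?_
  have hinner := dopSymbol_mem_polynomialMapsLE r T α (P := C (n : ℂ)) (Q := C (m : ℂ) + X)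
    (by simp) (by rw [natDegree_C_add]; exact natDegree_X_le) (const_mem_polynomialMapsLE v)
  have houter := dopSymbol_mem_polynomialMapsLE r T α (P := C ((n : ℂ) + m) + X)
    (Q := C ((l : ℂ) - m) - X) (by rw [natDegree_C_add]; exact natDegree_X_le)
    (by rw [sub_eq_add_neg, natDegree_C_add, natDegree_neg]; exact natDegree_X_le) hinner
  simp only [eval_add, eval_sub, eval_C, eval_X] at houter
  rw [omegaOp_single, sum_choose_mul_neg_one_pow_smul_eq_zero (by omega) houter, single_zero,
    LinearMap.zero_apply]

/-- for an `a_r`-module `M` and `α ∈ ℂ`, for every integer `s > 2r+2` and all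
`l, m ∈ ℤ`, the operator `ω^{(s)}_{l,m}` is identically zero on `N(M,α)`. -/
theorem omega_vanishes_above_top (r : ℕ) (T : ℕ → Module.End ℂ M)
    (hT : IsArModule r T) (α : ℂ) (s : ℕ) (hs : 2 * r + 2 < s) (l m : ℤ) :
    omegaOp r T α s l m = 0 :=
  omega_vanishes_above_top_general r T α s hs l m
end

section
/- Let r ≥ 1, let M be an a_r-module such that T_r : M → M is injective, and let β ∈ ℂ[t,t⁻¹]. Then for all l, m ∈ ℤ, the operator Σ_{i=0}^{2r+2} binom(2r+2,i)·(−1)^{2r+2−i}·D^β_{l−m−i}∘D^β_{m+i} is injective on N(M,β). -/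
open Finsupp

variable {M : Type*} [AddCommGroup M] [Module ℂ M]

/-- The multiplication operator by `β t^n`, where `β = Σ_j b_j t^j` is a Laurent polynomial
(encoded as the finitely supported family `β : ℤ →₀ ℂ` of its coefficients):
`v ⊗ t^k ↦ Σ_j b_j • (v ⊗ t^{k+n+j})`. -/
noncomputable def Bop (β : ℤ →₀ ℂ) (n : ℤ) : (ℤ →₀ M) →ₗ[ℂ] (ℤ →₀ M) :=
  Finsupp.lsum ℂ fun k : ℤ =>
    ∑ j ∈ β.support, β j • (Finsupp.lsingle (k + n + j) : M →ₗ[ℂ] ℤ →₀ M)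

/-- The twisted operator `D^β_n = D_n + β t^n` on `N(M,β) = N(M,0)`:
`D^β_n (v ⊗ t^k) = D_n (v ⊗ t^k) + Σ_j b_j • (v ⊗ t^{k+n+j})`. -/
noncomputable def DBop (r : ℕ) (T : ℕ → Module.End ℂ M) (β : ℤ →₀ ℂ) (n : ℤ) :
    (ℤ →₀ M) →ₗ[ℂ] (ℤ →₀ M) :=
  Dop r T 0 n + Bop β n

/-!
Write `D^β_n = t^n ∘ E(n)` with `E(x) = deg + β + Σ_p x^{p+1}/(p+1)! • T_p` (`DBopFactor`),
a polynomial in `x` of degree `r + 1` with leading coefficient `T_r / (r+1)!`. Moving `t^{m+i}`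
past `E(l-m-i)` turns `D^β_{l-m-i} D^β_{m+i}` into `t^l (E(l-m-i) + m + i) E(m+i)`, a product of
two operator-valued polynomials in `i` of degree `r + 1` (the summand `m + i` has degree
`1 < r + 1`). The alternating binomial sum is the `(2r+2)`-th forward difference in `i`, which
sees only the product of the top coefficients, so the operator is
`(-1)^{r+1} binom(2r+2, r+1) t^l T_r²`, injective with `T_r`.
-/

open Polynomial
open scoped fwdDiff Nat

section ForwardDifference

variable {R G : Type*} [Ring R] [AddCommGroup G] [Module R G]

theorem fwdDiff_iter_zero {N : Type*} [AddCommMonoid N] (h : N) (n : ℕ) :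
    Δ_[h] ^[n] (0 : N → G) = 0 :=
  Function.iterate_fixed (fwdDiff_const h 0) n

theorem fwdDiff_iter_const {N : Type*} [AddCommMonoid N] (h : N) (g : G) (n : ℕ) :
    Δ_[h] ^[n + 1] (fun _ => g) = 0 := by
  rw [Function.iterate_succ_apply, fwdDiff_const]
  exact fwdDiff_iter_zero h n

theorem fwdDiff_iter_smul_const {N : Type*} [AddCommMonoid N] (h : N) (f : N → R) (g : G)
    (n : ℕ) : Δ_[h] ^[n] (fun x => f x • g) = fun x => Δ_[h] ^[n] f x • g := by
  induction n generalizing f with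
  | zero => rfl
  | succ n ih =>
    rw [Function.iterate_succ_apply, Function.iterate_succ_apply, fwdDiff_smul_const]
    exact ih _

theorem sum_choose_smul_eq_fwdDiff_iter (s : ℕ) (f : R → G) :
    ∑ i ∈ Finset.range (s + 1), ((s.choose i : R) * (-1) ^ (s - i)) • f i = Δ_[1] ^[s] f 0 := by
  rw [fwdDiff_iter_eq_sum_shift]
  refine Finset.sum_congr rfl fun i _ => ?_
  rw [← Int.cast_smul_eq_zsmul R]
  simp [mul_comm]

end ForwardDifference

section PolynomialFunctions

variable {R G : Type*} [CommRing R] [AddCommGroup G] [Module R G]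

theorem Polynomial.fwdDiff_iter_eval_of_natDegree_le {P : R[X]} {n : ℕ} (hP : P.natDegree ≤ n) :
    Δ_[1] ^[n] P.eval = fun _ => P.coeff n * n ! := by
  rcases hP.lt_or_eq with hlt | rfl
  · rw [fwdDiff_iter_eq_zero_of_degree_lt hlt, coeff_eq_zero_of_natDegree_lt hlt, zero_mul]
    rfl
  · rw [fwdDiff_iter_degree_eq_factorial]
    rfl

theorem Polynomial.natDegree_affine_pow_le (c e : R) (k : ℕ) :
    ((C c + C e * X) ^ k).natDegree ≤ k := by
  have h₁ : (C c + C e * X).natDegree ≤ 1 := by compute_degree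
  exact (natDegree_pow_le_of_le k h₁).trans_eq (mul_one k)

theorem fwdDiff_iter_eval_smul {P : R[X]} {n : ℕ} (hP : P.natDegree ≤ n) (g : G) :
    Δ_[1] ^[n] (fun x => P.eval x • g) = fun _ => (P.coeff n * n !) • g := by
  rw [fwdDiff_iter_smul_const, fwdDiff_iter_eval_of_natDegree_le hP]

theorem fwdDiff_iter_affine_pow_smul_of_lt (c e : R) (g : G) {k n : ℕ} (hk : k < n) :
    Δ_[1] ^[n] (fun x => (c + e * x) ^ k • g) = 0 := by
  have hP : ((C c + C e * X) ^ k).natDegree < n := (natDegree_affine_pow_le c e k).trans_lt hk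
  have := fwdDiff_iter_eval_smul hP.le g
  simp only [eval_pow, eval_add, eval_C, eval_mul, eval_X, coeff_eq_zero_of_natDegree_lt hP,
    zero_mul, zero_smul] at this
  exact this

theorem fwdDiff_iter_affine_pow_smul (c e : R) (g : G) (n : ℕ) :
    Δ_[1] ^[n] (fun x => (c + e * x) ^ n • g) = fun _ => (e ^ n * n !) • g := by
  have hcoeff : ((C c + C e * X) ^ n).coeff n = e ^ n := by
    have h₁ : (C c + C e * X).natDegree ≤ 1 := by compute_degree
    simpa using coeff_pow_of_natDegree_le (m := n) h₁
  have := fwdDiff_iter_eval_smul (natDegree_affine_pow_le c e n) g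
  rw [hcoeff] at this
  simpa using this

variable (G) in
def polyFun (d : ℕ) : Submodule R (R → G) :=
  Submodule.span R {f | ∃ P : R[X], P.natDegree ≤ d ∧ ∃ g : G, f = fun x => P.eval x • g}

theorem const_mem_polyFun (g : G) (d : ℕ) : (fun _ : R => g) ∈ polyFun G d :=
  Submodule.subset_span ⟨1, by simp, g, by simp⟩

theorem affine_pow_smul_mem_polyFun (c e : R) (g : G) {k d : ℕ} (hk : k ≤ d) :
    (fun x : R => (c + e * x) ^ k • g) ∈ polyFun G d :=
  Submodule.subset_span ⟨_, (natDegree_affine_pow_le c e k).trans hk, g, by simp⟩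

theorem fwdDiff_iter_mul_of_mem_polyFun {A : Type*} [Ring A] [Algebra R A] {d e : ℕ}
    {f g : R → A} (hf : f ∈ polyFun A d) (hg : g ∈ polyFun A e) :
    Δ_[1] ^[d + e] (f * g) = ((d + e).choose d : R) • (Δ_[1] ^[d] f * Δ_[1] ^[e] g) := by
  induction hf using Submodule.span_induction with
  | mem f hf =>
    obtain ⟨P, hP, a, rfl⟩ := hf
    induction hg using Submodule.span_induction with
    | mem g hg =>
      obtain ⟨Q, hQ, b, rfl⟩ := hg
      have hPQ : (fun x => P.eval x • a) * (fun x => Q.eval x • b)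
          = fun x => (P * Q).eval x • (a * b) := by
        funext x
        rw [Pi.mul_apply, smul_mul_smul_comm, eval_mul]
      rw [hPQ, fwdDiff_iter_eval_smul (natDegree_mul_le_of_le hP hQ), fwdDiff_iter_eval_smul hP,
        fwdDiff_iter_eval_smul hQ, coeff_mul_add_eq_of_natDegree_le hP hQ]
      funext x
      simp only [Pi.mul_apply, Pi.smul_apply, smul_mul_smul_comm, smul_smul]
      congr 1
      rw [← Nat.add_choose_mul_factorial_mul_factorial d e, Nat.choose_symm_add]
      push_cast
      ring
    | zero => simp [fwdDiff_iter_zero]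
    | add g₁ g₂ _ _ h₁ h₂ =>
      rw [mul_add, fwdDiff_iter_add, h₁, h₂, fwdDiff_iter_add, mul_add, smul_add]
    | smul c g _ h =>
      rw [mul_smul_comm, fwdDiff_iter_const_smul, h, fwdDiff_iter_const_smul, mul_smul_comm,
        smul_comm]
  | zero => simp [fwdDiff_iter_zero]
  | add f₁ f₂ _ _ h₁ h₂ =>
    rw [add_mul, fwdDiff_iter_add, h₁, h₂, fwdDiff_iter_add, add_mul, smul_add]
  | smul c f _ h =>
    rw [smul_mul_assoc, fwdDiff_iter_const_smul, h, fwdDiff_iter_const_smul, smul_mul_assoc,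
      smul_comm]

end PolynomialFunctions

section TwistedModule

variable (r : ℕ) (T : ℕ → Module.End ℂ M) (β : ℤ →₀ ℂ)

noncomputable def degOp : Module.End ℂ (ℤ →₀ M) :=
  Finsupp.lsum ℂ fun k : ℤ => (k : ℂ) • Finsupp.lsingle k

noncomputable def DBopFactor (x : ℂ) : Module.End ℂ (ℤ →₀ M) :=
  degOp + Bop β 0 +
    ∑ p ∈ Finset.range (r + 1), (x ^ (p + 1) / (p + 1)! : ℂ) • mapRange.linearMap (T p)

theorem DBop_eq_lmapDomain_comp (n : ℤ) :
    DBop r T β n = lmapDomain M ℂ (· + n) ∘ₗ DBopFactor r T β n := by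
  refine Finsupp.lhom_ext fun k v => ?_
  simp [DBop, Dop, Bop, DBopFactor, degOp, mapDomain_add, mapDomain_finsetSum, single_finsetSum,
    add_right_comm]

theorem DBopFactor_comp_lmapDomain (x : ℂ) (c : ℤ) :
    DBopFactor r T β x ∘ₗ lmapDomain M ℂ (· + c)
      = lmapDomain M ℂ (· + c) ∘ₗ (DBopFactor r T β x + (c : ℂ) • 1) := by
  refine Finsupp.lhom_ext fun k v => ?_
  simp [DBopFactor, degOp, Bop, mapDomain_add, mapDomain_finsetSum, add_smul,
    add_right_comm]

theorem DBop_comp_DBop (a b : ℤ) :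
    DBop r T β a ∘ₗ DBop r T β b
      = lmapDomain M ℂ (· + (a + b)) ∘ₗ
          ((DBopFactor r T β a + (b : ℂ) • 1) * DBopFactor r T β b) := by
  have hshift : lmapDomain M ℂ (· + a) ∘ₗ lmapDomain M ℂ (· + b)
      = lmapDomain M ℂ (· + (a + b)) := by
    rw [← lmapDomain_comp]
    congr 1
    funext k
    simp [add_assoc, add_comm b]
  calc DBop r T β a ∘ₗ DBop r T β b
      = lmapDomain M ℂ (· + a) ∘ₗ (DBopFactor r T β a ∘ₗ lmapDomain M ℂ (· + b))
          ∘ₗ DBopFactor r T β b := by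
        rw [DBop_eq_lmapDomain_comp, DBop_eq_lmapDomain_comp]
        rfl
    _ = _ := by
        rw [DBopFactor_comp_lmapDomain, ← hshift]
        rfl

theorem DBopFactor_affine_eq (c e : ℂ) :
    (fun x => DBopFactor r T β (c + e * x))
      = (fun _ => degOp + Bop β 0) + ∑ p ∈ Finset.range (r + 1),
          fun x => (c + e * x) ^ (p + 1) • (((p + 1)! : ℂ)⁻¹ • mapRange.linearMap (T p)) := by
  funext x
  simp [DBopFactor, Finset.sum_apply, smul_smul, div_eq_mul_inv]

theorem DBopFactor_affine_mem_polyFun (c e : ℂ) :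
    (fun x => DBopFactor r T β (c + e * x)) ∈ polyFun _ (r + 1) := by
  rw [DBopFactor_affine_eq]
  refine add_mem (const_mem_polyFun _ _) (Submodule.sum_mem _ fun p hp => ?_)
  exact affine_pow_smul_mem_polyFun c e _ (Finset.mem_range.1 hp)

theorem fwdDiff_iter_DBopFactor_affine (c e : ℂ) :
    Δ_[1] ^[r + 1] (fun x => DBopFactor r T β (c + e * x))
      = fun _ => e ^ (r + 1) • mapRange.linearMap (T r) := by
  rw [DBopFactor_affine_eq, fwdDiff_iter_add, fwdDiff_iter_const, zero_add,
    fwdDiff_iter_finsetSum, Finset.sum_eq_single r]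
  · rw [fwdDiff_iter_affine_pow_smul]
    funext x
    rw [smul_smul, mul_assoc, mul_inv_cancel₀ (Nat.cast_ne_zero.2 (r + 1).factorial_ne_zero),
      mul_one]
  · intro p hp hpr
    have := Finset.mem_range.1 hp
    exact fwdDiff_iter_affine_pow_smul_of_lt c e _ (by omega)
  · simp

theorem sum_choose_smul_DBop_comp_DBop (hr : 1 ≤ r) (l m : ℤ) :
    ∑ i ∈ Finset.range (2 * r + 3), (((2 * r + 2).choose i : ℂ) * (-1) ^ (2 * r + 2 - i)) •
        (DBop r T β (l - m - (i : ℤ)) ∘ₗ DBop r T β (m + (i : ℤ)))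
      = lmapDomain M ℂ (· + l) ∘ₗ
          ((((2 * r + 2).choose (r + 1) : ℂ) * (-1) ^ (r + 1)) •
            mapRange.linearMap (T r ∘ₗ T r)) := by
  -- both factors written in the affine shape `c + e * x` of the lemmas above
  set f₁ : ℂ → Module.End ℂ (ℤ →₀ M) :=
    (fun x => DBopFactor r T β ((l - m : ℤ) + (-1) * x)) + fun x => ((m : ℂ) + 1 * x) ^ 1 • 1
  set f₂ : ℂ → Module.End ℂ (ℤ →₀ M) := fun x => DBopFactor r T β (m + 1 * x)
  have hf₁ : f₁ ∈ polyFun _ (r + 1) :=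
    add_mem (DBopFactor_affine_mem_polyFun r T β _ _)
      (affine_pow_smul_mem_polyFun _ _ _ (by omega))
  have hf₂ : f₂ ∈ polyFun _ (r + 1) := DBopFactor_affine_mem_polyFun r T β _ _
  have hΔf₁ : Δ_[1] ^[r + 1] f₁ = fun _ => (-1 : ℂ) ^ (r + 1) • mapRange.linearMap (T r) := by
    rw [fwdDiff_iter_add, fwdDiff_iter_DBopFactor_affine,
      fwdDiff_iter_affine_pow_smul_of_lt _ _ _ (by omega : 1 < r + 1), add_zero]
  have hΔf₂ : Δ_[1] ^[r + 1] f₂ = fun _ => mapRange.linearMap (T r) := by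
    rw [fwdDiff_iter_DBopFactor_affine, one_pow, one_smul]
  have hterm : ∀ i : ℕ, DBop r T β (l - m - i) ∘ₗ DBop r T β (m + i)
      = lmapDomain M ℂ (· + l) * (f₁ * f₂) i := by
    intro i
    have h₁ : ((l - m - i : ℤ) : ℂ) = ((l - m : ℤ) : ℂ) + (-1) * i := by push_cast; ring
    have h₂ : ((m + i : ℤ) : ℂ) = (m : ℂ) + 1 * i := by push_cast; ring
    rw [DBop_comp_DBop, h₁, h₂, show l - m - i + (m + i) = l by ring]
    simp only [f₁, f₂, Pi.mul_apply, Pi.add_apply, pow_one]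
    rfl
  simp_rw [hterm, ← mul_smul_comm, ← Finset.mul_sum, ← Module.End.mul_eq_comp]
  rw [show 2 * r + 3 = 2 * r + 2 + 1 from rfl,
    sum_choose_smul_eq_fwdDiff_iter (2 * r + 2) (f₁ * f₂),
    show 2 * r + 2 = (r + 1) + (r + 1) by ring,
    fwdDiff_iter_mul_of_mem_polyFun hf₁ hf₂, hΔf₁, hΔf₂]
  simp [mapRange.linearMap_comp, Module.End.mul_eq_comp, smul_smul, mul_comm]

end TwistedModule

theorem twisted_omega_injective_general (r : ℕ) (hr : 1 ≤ r) (T : ℕ → Module.End ℂ M)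
    (hinj : Function.Injective (T r))
    (β : ℤ →₀ ℂ) (l m : ℤ) :
    Function.Injective
      (∑ i ∈ Finset.range (2 * r + 3),
        (((2 * r + 2).choose i : ℂ) * (-1) ^ (2 * r + 2 - i)) •
          (DBop r T β (l - m - (i : ℤ)) ∘ₗ DBop r T β (m + (i : ℤ)))) := by
  rw [← LinearMap.coe_sum, sum_choose_smul_DBop_comp_DBop r T β hr l m]
  have hc : ((2 * r + 2).choose (r + 1) : ℂ) * (-1) ^ (r + 1) ≠ 0 :=
    mul_ne_zero (Nat.cast_ne_zero.2 (Nat.choose_pos (by omega)).ne') (pow_ne_zero _ (by norm_num))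
  exact (mapDomain_injective (add_left_injective l)).comp <|
    (smul_right_injective _ hc).comp (mapRange_injective _ (map_zero _) (hinj.comp hinj))

/-- for `r ≥ 1`, an `a_r`-module `M` with `T_r` injective, and a Laurent
polynomial `β`, the operator `Σ_{i=0}^{2r+2} binom(2r+2,i)·(−1)^{2r+2−i}·D^β_{l−m−i}∘D^β_{m+i}`
is injective on `N(M,β)` for all `l, m ∈ ℤ`. -/
theorem twisted_omega_injective (r : ℕ) (hr : 1 ≤ r) (T : ℕ → Module.End ℂ M)
    (hT : IsArModule r T) (hinj : Function.Injective (T r))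
    (β : ℤ →₀ ℂ) (l m : ℤ) :
    Function.Injective
      (∑ i ∈ Finset.range (2 * r + 3),
        (((2 * r + 2).choose i : ℂ) * (-1) ^ (2 * r + 2 - i)) •
          (DBop r T β (l - m - (i : ℤ)) ∘ₗ DBop r T β (m + (i : ℤ)))) :=
  twisted_omega_injective_general r hr T hinj β l m
end
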